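/- For any two points x, x' ∈ ℝ^d, setting s = x' − x, y = ∇f(x') − ∇f(x), ŝ = H_*^{1/2}s, ŷ = H_*^{-1/2}y, σ = (M/μ^{3/2})‖H_*^{1/2}(x − x_*)‖, σ' = (M/μ^{3/2})‖H_*^{1/2}(x' − x_*)‖ and τ = max{σ, σ'}, if τ < 1 then (1 − τ)‖ŝ‖² ≤ ŝᵀŷ ≤ (1 + τ)‖ŝ‖² and (1 − τ)‖ŝ‖ ≤ ‖ŷ‖ ≤ (1 + τ)‖ŝ‖. -/

import Mathlib

noncomputable section

open Matrix Finset

abbrev E (d : ℕ) := EuclideanSpace ℝ (Fin d)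
abbrev Mat (d : ℕ) := Matrix (Fin d) (Fin d) ℝ

/-- Spectral (operator 2-) norm of a real matrix. -/
def spec {d : ℕ} (A : Mat d) : ℝ := ‖Matrix.toEuclideanCLM (𝕜 := ℝ) A‖

/-- Frobenius norm of a real matrix. -/
def frob {d : ℕ} (A : Mat d) : ℝ := Real.sqrt (∑ i, ∑ j, (A i j) ^ 2)

/-- A matrix acting on a Euclidean vector. -/
def mApp {d : ℕ} (A : Mat d) (v : E d) : E d := Matrix.toEuclideanCLM (𝕜 := ℝ) A v

/-- Outer product `u vᵀ`. -/
def outer {d : ℕ} (u v : E d) : Mat d := Matrix.of fun i j => u i * v j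

/-- Euclidean dot product. -/
def dot {d : ℕ} (u v : E d) : ℝ := ∑ i, u i * v i

/-- `σ(x) = (M/μ^{3/2})·‖H_*^{1/2}(x − x_*)‖`. -/
def sig {d : ℕ} (M μ : ℝ) (sqH : Mat d) (xs x : E d) : ℝ :=
  M / μ ^ ((3:ℝ)/2) * ‖mApp sqH (x - xs)‖

/-- `τ = max{σ(x), σ(x')}`. -/
def tauP {d : ℕ} (M μ : ℝ) (sqH : Mat d) (xs x x' : E d) : ℝ :=
  max (sig M μ sqH xs x) (sig M μ sqH xs x')

open scoped RealInnerProductSpace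

/-!
With `ŝ = P s` and `T = P⁻¹`, where `P = H_*^{1/2}`, one has `ŷ − ŝ = T (y − H_* s)`, and by the
mean value inequality applied to `g − H_*` on the segment `[x, x']`,
`‖y − H_* s‖ ≤ sup_z ‖∇²f(z) − H_*‖ · ‖s‖ ≤ M ‖T‖ max(‖P(x − x_*)‖, ‖P(x' − x_*)‖) · ‖T‖ ‖ŝ‖`.
Since `H_* ⪰ μ I` gives `‖T‖ ≤ μ^{-1/2}`, altogether `‖ŷ − ŝ‖ ≤ τ ‖ŝ‖`, and the four bounds are
the Cauchy–Schwarz and triangle inequalities for a vector `ŷ` within relative distance `τ` of `ŝ`.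
-/

section InnerProduct

variable {F : Type*}

theorem norm_bounds_of_norm_sub_le [SeminormedAddCommGroup F] {s y : F} {τ : ℝ}
    (h : ‖y - s‖ ≤ τ * ‖s‖) : (1 - τ) * ‖s‖ ≤ ‖y‖ ∧ ‖y‖ ≤ (1 + τ) * ‖s‖ := by
  constructor
  · linarith [norm_sub_norm_le s y, norm_sub_rev s y]
  · linarith [norm_sub_norm_le y s]

theorem inner_bounds_of_norm_sub_le [SeminormedAddCommGroup F] [InnerProductSpace ℝ F]
    {s y : F} {τ : ℝ} (h : ‖y - s‖ ≤ τ * ‖s‖) :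
    (1 - τ) * ‖s‖ ^ 2 ≤ ⟪s, y⟫ ∧ ⟪s, y⟫ ≤ (1 + τ) * ‖s‖ ^ 2 := by
  have hsplit : ⟪s, y⟫ = ‖s‖ ^ 2 + ⟪s, y - s⟫ := by
    rw [inner_sub_right, real_inner_self_eq_norm_sq]; ring
  have hcs : |⟪s, y - s⟫| ≤ τ * ‖s‖ ^ 2 := calc
    |⟪s, y - s⟫| ≤ ‖s‖ * ‖y - s‖ := abs_real_inner_le_norm _ _
    _ ≤ ‖s‖ * (τ * ‖s‖) := by gcongr
    _ = τ * ‖s‖ ^ 2 := by ring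
  rw [hsplit]
  constructor <;> linarith [abs_le.mp hcs]

theorem sqrt_mul_norm_le_norm_apply [NormedAddCommGroup F] [InnerProductSpace ℝ F]
    {P : F →L[ℝ] F} (hP : (P : F →ₗ[ℝ] F).IsSymmetric) {μ : ℝ} (hμ : 0 ≤ μ)
    (h : ∀ v, μ * ‖v‖ ^ 2 ≤ ⟪v, P (P v)⟫) (v : F) : √μ * ‖v‖ ≤ ‖P v‖ := by
  have hsq : ⟪v, P (P v)⟫ = ‖P v‖ ^ 2 := by
    rw [← real_inner_self_eq_norm_sq]; exact (hP v (P v)).symm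
  refine (pow_le_pow_iff_left₀ (by positivity) (norm_nonneg _) two_ne_zero).mp ?_
  rw [mul_pow, Real.sq_sqrt hμ, ← hsq]
  exact h v

end InnerProduct

section WeightedSecant

variable {F : Type*} [NormedAddCommGroup F] [NormedSpace ℝ F]

theorem norm_le_opNorm_mul_norm_of_leftInverse {P T : F →L[ℝ] F}
    (hTP : Function.LeftInverse T P) (v : F) : ‖v‖ ≤ ‖T‖ * ‖P v‖ := by
  simpa only [hTP v] using T.le_opNorm (P v)

theorem opNorm_le_inv_of_rightInverse {P T : F →L[ℝ] F} (hTP : Function.RightInverse T P)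
    {c : ℝ} (hc : 0 < c) (hP : ∀ v, c * ‖v‖ ≤ ‖P v‖) : ‖T‖ ≤ c⁻¹ :=
  T.opNorm_le_bound (by positivity) fun u => by
    rw [inv_mul_eq_div, le_div_iff₀' hc]
    simpa only [hTP u] using hP (T u)

theorem norm_apply_sub_le_max_of_mem_segment (P : F →L[ℝ] F) {x x' z : F} (xs : F)
    (hz : z ∈ segment ℝ x x') : ‖P (z - xs)‖ ≤ max ‖P (x - xs)‖ ‖P (x' - xs)‖ := by
  refine (convexOn_norm convex_univ).le_on_segment trivial trivial ?_
  obtain ⟨a, b, ha, hb, hab, rfl⟩ := hz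
  refine ⟨a, b, ha, hb, hab, ?_⟩
  rw [← map_smul, ← map_smul, ← map_add]
  congr 1
  linear_combination (norm := module) -(hab • xs)

theorem norm_weighted_secant_sub_le {g : F → F} {G : F → F →L[ℝ] F}
    (hg : ∀ z, HasFDerivAt g (G z) z) {P T : F →L[ℝ] F} (hTP : Function.LeftInverse T P)
    {xs : F} {M : ℝ} (hM : 0 ≤ M) (hLip : ∀ z, ‖G z - P ∘L P‖ ≤ M * ‖z - xs‖) (x x' : F) :
    ‖T (g x' - g x) - P (x' - x)‖ ≤
      M * ‖T‖ ^ 3 * max ‖P (x - xs)‖ ‖P (x' - xs)‖ * ‖P (x' - x)‖ := by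
  set m := max ‖P (x - xs)‖ ‖P (x' - xs)‖
  have hderiv : ∀ z ∈ segment ℝ x x', ‖G z - P ∘L P‖ ≤ M * (‖T‖ * m) := fun z hz => calc
    ‖G z - P ∘L P‖ ≤ M * ‖z - xs‖ := hLip z
    _ ≤ M * (‖T‖ * ‖P (z - xs)‖) := by
      gcongr; exact norm_le_opNorm_mul_norm_of_leftInverse hTP _
    _ ≤ M * (‖T‖ * m) := by
      gcongr; exact norm_apply_sub_le_max_of_mem_segment P xs hz
  have hmv : ‖g x' - g x - (P ∘L P) (x' - x)‖ ≤ M * (‖T‖ * m) * ‖x' - x‖ :=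
    (convex_segment x x').norm_image_sub_le_of_norm_hasFDerivWithin_le'
      (fun z _ => (hg z).hasFDerivWithinAt) hderiv
      (left_mem_segment ℝ x x') (right_mem_segment ℝ x x')
  have hsecant : T (g x' - g x) - P (x' - x) = T (g x' - g x - (P ∘L P) (x' - x)) := by
    rw [ContinuousLinearMap.comp_apply, map_sub T (g x' - g x), hTP]
  calc ‖T (g x' - g x) - P (x' - x)‖
      ≤ ‖T‖ * (M * (‖T‖ * m) * ‖x' - x‖) := by
        rw [hsecant]; exact T.le_opNorm_of_le hmv
    _ ≤ ‖T‖ * (M * (‖T‖ * m) * (‖T‖ * ‖P (x' - x)‖)) := by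
        have : 0 ≤ m := (norm_nonneg _).trans (le_max_left _ _)
        gcongr; exact norm_le_opNorm_mul_norm_of_leftInverse hTP _
    _ = M * ‖T‖ ^ 3 * m * ‖P (x' - x)‖ := by ring

end WeightedSecant

section Matrix

variable {d : ℕ}

theorem dot_eq_inner (u v : E d) : dot u v = ⟪u, v⟫ := by
  simp only [dot, PiLp.inner_apply, RCLike.inner_apply, conj_trivial, mul_comm]

theorem leftInverse_toEuclideanCLM_nonsing_inv {A : Mat d} (hA : IsUnit A.det) :
    Function.LeftInverse (toEuclideanCLM (𝕜 := ℝ) A⁻¹) (toEuclideanCLM (𝕜 := ℝ) A) := fun v => by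
  rw [← mul_apply_eq_comp, ← map_mul, nonsing_inv_mul A hA, map_one, one_apply_eq_self]

theorem rightInverse_toEuclideanCLM_nonsing_inv {A : Mat d} (hA : IsUnit A.det) :
    Function.RightInverse (toEuclideanCLM (𝕜 := ℝ) A⁻¹) (toEuclideanCLM (𝕜 := ℝ) A) := fun v => by
  rw [← mul_apply_eq_comp, ← map_mul, mul_nonsing_inv A hA, map_one, one_apply_eq_self]

theorem tauP_eq_mul_max {M μ : ℝ} (hμ : 0 ≤ μ) (hM : 0 ≤ M) (sqH : Mat d) (xs x x' : E d) :
    tauP M μ sqH xs x x' =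
      M / √μ ^ 3 * max ‖mApp sqH (x - xs)‖ ‖mApp sqH (x' - xs)‖ := by
  have hpow : μ ^ ((3 : ℝ) / 2) = √μ ^ 3 := by
    rw [Real.sqrt_eq_rpow, ← Real.rpow_natCast, ← Real.rpow_mul hμ]; norm_num
  rw [tauP, sig, sig, hpow, mul_max_of_nonneg _ _ (by positivity)]

end Matrix

theorem weighted_secant_inner_and_norm_bounds_general
    {d : ℕ}
    (g : E d → E d) (Hess : E d → Mat d) (xs : E d)
    (μ M : ℝ) (hμ : 0 < μ) (hM : 0 < M)
    -- `g` is the gradient of `f`, and `Hess` its Hessian (so `f` is twice differentiable)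
    (hHd : ∀ x, HasFDerivAt g (Matrix.toEuclideanCLM (𝕜 := ℝ) (Hess x)) x)
    -- Assumption 1: strong convexity and gradient Lipschitz continuity
    (hHl : ∀ x v, μ * ‖v‖ ^ 2 ≤ dot v (mApp (Hess x) v))
    -- Assumption 2: Hessian Lipschitz continuity toward the optimum
    (hLip : ∀ x, spec (Hess x - Hess xs) ≤ M * ‖x - xs‖)
    -- `sqH` is the positive definite square root `H_*^{1/2}` of `H_* = ∇²f(x_*)`
    (sqH : Mat d) (hsqH : sqH.PosDef) (hsqH2 : sqH * sqH = Hess xs)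
    (x x' : E d) :
    (1 - tauP M μ sqH xs x x') * ‖mApp sqH (x' - x)‖ ^ 2 ≤
        dot (mApp sqH (x' - x)) (mApp sqH⁻¹ (g x' - g x)) ∧
    dot (mApp sqH (x' - x)) (mApp sqH⁻¹ (g x' - g x)) ≤
        (1 + tauP M μ sqH xs x x') * ‖mApp sqH (x' - x)‖ ^ 2 ∧
    (1 - tauP M μ sqH xs x x') * ‖mApp sqH (x' - x)‖ ≤ ‖mApp sqH⁻¹ (g x' - g x)‖ ∧
    ‖mApp sqH⁻¹ (g x' - g x)‖ ≤ (1 + tauP M μ sqH xs x x') * ‖mApp sqH (x' - x)‖ := by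
  set P := toEuclideanCLM (𝕜 := ℝ) sqH
  set T := toEuclideanCLM (𝕜 := ℝ) sqH⁻¹
  have hdet : IsUnit sqH.det := (isUnit_iff_isUnit_det sqH).mp hsqH.isUnit
  have hHs : toEuclideanCLM (𝕜 := ℝ) (Hess xs) = P ∘L P := by rw [← hsqH2, map_mul]; rfl
  have hP : (P : E d →ₗ[ℝ] E d).IsSymmetric := by
    rw [coe_toEuclideanCLM_eq_toEuclideanLin, isSymmetric_toEuclideanLin_iff]
    exact hsqH.isHermitian
  have hlow : ∀ v, √μ * ‖v‖ ≤ ‖P v‖ := sqrt_mul_norm_le_norm_apply hP hμ.le fun v => by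
    simpa only [dot_eq_inner, mApp, hHs, ContinuousLinearMap.comp_apply] using hHl xs v
  have hT : ‖T‖ ≤ (√μ)⁻¹ :=
    opNorm_le_inv_of_rightInverse (rightInverse_toEuclideanCLM_nonsing_inv hdet)
      (Real.sqrt_pos.mpr hμ) hlow
  have hLip' : ∀ z, ‖toEuclideanCLM (𝕜 := ℝ) (Hess z) - P ∘L P‖ ≤ M * ‖z - xs‖ := fun z => by
    simpa only [spec, map_sub, hHs] using hLip z
  have hsecant := norm_weighted_secant_sub_le hHd (leftInverse_toEuclideanCLM_nonsing_inv hdet)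
    hM.le hLip' x x'
  have hT3 : M * ‖T‖ ^ 3 ≤ M / √μ ^ 3 := by rw [div_eq_mul_inv, ← inv_pow]; gcongr
  have hτ : M * ‖T‖ ^ 3 * max ‖P (x - xs)‖ ‖P (x' - xs)‖ ≤ tauP M μ sqH xs x x' := by
    rw [tauP_eq_mul_max hμ.le hM.le]
    exact mul_le_mul_of_nonneg_right hT3 (by positivity)
  have hclose : ‖mApp sqH⁻¹ (g x' - g x) - mApp sqH (x' - x)‖ ≤
      tauP M μ sqH xs x x' * ‖mApp sqH (x' - x)‖ :=
    hsecant.trans (mul_le_mul_of_nonneg_right hτ (norm_nonneg _))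
  rw [dot_eq_inner]
  exact ⟨(inner_bounds_of_norm_sub_le hclose).1, (inner_bounds_of_norm_sub_le hclose).2,
    (norm_bounds_of_norm_sub_le hclose).1, (norm_bounds_of_norm_sub_le hclose).2⟩

theorem weighted_secant_inner_and_norm_bounds
    {d : ℕ}
    (f : E d → ℝ) (g : E d → E d) (Hess : E d → Mat d) (xs : E d)
    (μ L M : ℝ) (hμ : 0 < μ) (hμL : μ ≤ L) (hM : 0 < M)
    -- `g` is the gradient of `f`, and `Hess` its Hessian (so `f` is twice differentiable)
    (hg : ∀ x, HasGradientAt f (g x) x)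
    (hHd : ∀ x, HasFDerivAt g (Matrix.toEuclideanCLM (𝕜 := ℝ) (Hess x)) x)
    -- `xs` is the unique minimizer of `f`
    (hmin : ∀ x, f xs ≤ f x)
    (huniq : ∀ x, (∀ y, f x ≤ f y) → x = xs)
    -- Assumption 1: strong convexity and gradient Lipschitz continuity
    (hgl : ∀ x y, μ * ‖x - y‖ ≤ ‖g x - g y‖)
    (hgu : ∀ x y, ‖g x - g y‖ ≤ L * ‖x - y‖)
    (hHl : ∀ x v, μ * ‖v‖ ^ 2 ≤ dot v (mApp (Hess x) v))
    (hHu : ∀ x v, dot v (mApp (Hess x) v) ≤ L * ‖v‖ ^ 2)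
    -- Assumption 2: Hessian Lipschitz continuity toward the optimum
    (hLip : ∀ x, spec (Hess x - Hess xs) ≤ M * ‖x - xs‖)
    -- `sqH` is the positive definite square root `H_*^{1/2}` of `H_* = ∇²f(x_*)`
    (sqH : Mat d) (hsqH : sqH.PosDef) (hsqH2 : sqH * sqH = Hess xs)
    (x x' : E d)
    (hτ : tauP M μ sqH xs x x' < 1) :
    (1 - tauP M μ sqH xs x x') * ‖mApp sqH (x' - x)‖ ^ 2 ≤
        dot (mApp sqH (x' - x)) (mApp sqH⁻¹ (g x' - g x)) ∧
    dot (mApp sqH (x' - x)) (mApp sqH⁻¹ (g x' - g x)) ≤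
        (1 + tauP M μ sqH xs x x') * ‖mApp sqH (x' - x)‖ ^ 2 ∧
    (1 - tauP M μ sqH xs x x') * ‖mApp sqH (x' - x)‖ ≤ ‖mApp sqH⁻¹ (g x' - g x)‖ ∧
    ‖mApp sqH⁻¹ (g x' - g x)‖ ≤ (1 + tauP M μ sqH xs x x') * ‖mApp sqH (x' - x)‖ :=
  weighted_secant_inner_and_norm_bounds_general g Hess xs μ M hμ hM hHd hHl hLip sqH hsqH hsqH2 x x'
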